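/- arXiv:math/0507410 — 3 statements merged into one kernel-verified Lean document; each statement's English description precedes it below -/
import Mathlib

section
/- For ν ∉ {1,−1,∞}, every 3-linear form U in the symmetry class generated by ξ_ν (i.e., with ξ_ν U = U) satisfies the identity −((ν²−ν+1)/(ν²−1))·U(x,y,z) + ((2ν−1)/(ν²−1))·U(x,z,y) + U(z,y,x) = 0 for all x,y,z. -/
open MonoidAlgebra

/-- The permutation `[1,3,2]`. -/
def p132 : Equiv.Perm (Fin 3) := Equiv.swap 1 2
/-- The permutation `[2,1,3]`. -/
def p213 : Equiv.Perm (Fin 3) := Equiv.swap 0 1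
/-- The permutation `[2,3,1]`, sending `1↦2, 2↦3, 3↦1`. -/
def p231 : Equiv.Perm (Fin 3) := Equiv.swap 0 2 * Equiv.swap 0 1
/-- The permutation `[3,1,2]`, sending `1↦3, 2↦1, 3↦2`. -/
def p312 : Equiv.Perm (Fin 3) := Equiv.swap 0 1 * Equiv.swap 0 2
/-- The permutation `[3,2,1]`. -/
def p321 : Equiv.Perm (Fin 3) := Equiv.swap 0 2

/-- `ξ_ν = (1/3)( e + ν·[1,3,2] + (1−ν)·[2,1,3] − ν·[2,3,1] + (ν−1)·[3,1,2] − [3,2,1] )`. -/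
noncomputable def xiNu (ν : ℝ) : MonoidAlgebra ℝ (Equiv.Perm (Fin 3)) :=
  single 1 (1 / 3) + single p132 (ν / 3) + single p213 ((1 - ν) / 3)
    + single p231 (-(ν / 3)) + single p312 ((ν - 1) / 3) + single p321 (-(1 / 3))

/-- The action `(aU)(v₁,v₂,v₃) = Σ_p a(p)·U(v_{p(1)},v_{p(2)},v_{p(3)})`. -/
noncomputable def act {V : Type*} [AddCommGroup V] [Module ℝ V]
    (a : MonoidAlgebra ℝ (Equiv.Perm (Fin 3)))
    (U : MultilinearMap ℝ (fun _ : Fin 3 => V) ℝ) (v : Fin 3 → V) : ℝ :=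
  a.coeff.sum fun p c => c * U (fun i => v (p i))

section Action

variable {V : Type*} [AddCommGroup V] [Module ℝ V]
  (U : MultilinearMap ℝ (fun _ : Fin 3 => V) ℝ) (v : Fin 3 → V)

theorem act_add (a b : MonoidAlgebra ℝ (Equiv.Perm (Fin 3))) :
    act (a + b) U v = act a U v + act b U v := by
  unfold act
  rw [coeff_add, Finsupp.sum_add_index' (fun _ => zero_mul _) (fun _ _ _ => add_mul _ _ _)]

theorem act_single (p : Equiv.Perm (Fin 3)) (c : ℝ) :
    act (single p c) U v = c * U (v ∘ p) := by
  unfold act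
  rw [coeff_single, Finsupp.sum_single_index (zero_mul _)]
  rfl

end Action

section Permutations

variable {V : Type*} (a b c : V)

theorem vec_comp_p132 : ![a, b, c] ∘ p132 = ![a, c, b] := by
  funext i; fin_cases i <;> simp [p132, Equiv.swap_apply_def]

theorem vec_comp_p213 : ![a, b, c] ∘ p213 = ![b, a, c] := by
  funext i; fin_cases i <;> simp [p213, Equiv.swap_apply_def]

theorem vec_comp_p231 : ![a, b, c] ∘ p231 = ![b, c, a] := by
  funext i; fin_cases i <;> simp [p231, Equiv.swap_apply_def]

theorem vec_comp_p312 : ![a, b, c] ∘ p312 = ![c, a, b] := by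
  funext i; fin_cases i <;> simp [p312, Equiv.swap_apply_def]

theorem vec_comp_p321 : ![a, b, c] ∘ p321 = ![c, b, a] := by
  funext i; fin_cases i <;> simp [p321, Equiv.swap_apply_def]

end Permutations

section SymmetryClass

variable {V : Type*} [AddCommGroup V] [Module ℝ V]
  (ν : ℝ) (U : MultilinearMap ℝ (fun _ : Fin 3 => V) ℝ)

theorem act_xiNu_vec (a b c : V) :
    act (xiNu ν) U ![a, b, c] =
      (U ![a, b, c] + ν * U ![a, c, b] + (1 - ν) * U ![b, a, c] - ν * U ![b, c, a]
        + (ν - 1) * U ![c, a, b] - U ![c, b, a]) / 3 := by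
  simp only [xiNu, act_add, act_single, Equiv.Perm.coe_one, Function.comp_id, vec_comp_p132,
    vec_comp_p213, vec_comp_p231, vec_comp_p312, vec_comp_p321]
  ring

/-- The fixed-point equations at `(x,y,z)`, `(x,z,y)` and `(y,z,x)` together involve all six
values of `U`; a suitable combination eliminates `U(y,x,z)`, `U(y,z,x)` and `U(z,x,y)`. -/
theorem xiNu_fixed_relation (hU : ∀ v, act (xiNu ν) U v = U v) (x y z : V) :
    -(ν ^ 2 - ν + 1) * U ![x, y, z] + (2 * ν - 1) * U ![x, z, y]
      + (ν ^ 2 - 1) * U ![z, y, x] = 0 := by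
  have hxyz := hU ![x, y, z]
  have hxzy := hU ![x, z, y]
  have hyzx := hU ![y, z, x]
  rw [act_xiNu_vec] at hxyz hxzy hyzx
  linear_combination (2 - ν) * hxyz + (2 - 2 * ν - ν ^ 2) * hxzy + (ν ^ 2 - 1) * hyzx

end SymmetryClass

theorem symmetry_class_linear_identity_general
    {V : Type*} [AddCommGroup V] [Module ℝ V]
    (ν : ℝ) (hν₁ : ν ≠ 1) (hν₂ : ν ≠ -1)
    (U : MultilinearMap ℝ (fun _ : Fin 3 => V) ℝ)
    (hU : ∀ v, act (xiNu ν) U v = U v) :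
    ∀ x y z : V,
      -((ν ^ 2 - ν + 1) / (ν ^ 2 - 1)) * U ![x, y, z]
        + ((2 * ν - 1) / (ν ^ 2 - 1)) * U ![x, z, y] + U ![z, y, x] = 0 := by
  intro x y z
  have hd : ν ^ 2 - 1 ≠ 0 := sub_ne_zero.mpr (sq_ne_one_iff.mpr ⟨hν₁, hν₂⟩)
  field_simp
  linear_combination xiNu_fixed_relation ν U hU x y z

/-- For `ν ∉ {1,−1,∞}`, every trilinear form `U` in the symmetry class generated by
`ξ_ν` (i.e. with `ξ_ν U = U`) satisfies
`−((ν²−ν+1)/(ν²−1))·U(x,y,z) + ((2ν−1)/(ν²−1))·U(x,z,y) + U(z,y,x) = 0`. -/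
theorem symmetry_class_linear_identity
    {V : Type*} [AddCommGroup V] [Module ℝ V] [FiniteDimensional ℝ V]
    (ν : ℝ) (hν₁ : ν ≠ 1) (hν₂ : ν ≠ -1)
    (U : MultilinearMap ℝ (fun _ : Fin 3 => V) ℝ)
    (hU : ∀ v, act (xiNu ν) U v = U v) :
    ∀ x y z : V,
      -((ν ^ 2 - ν + 1) / (ν ^ 2 - 1)) * U ![x, y, z]
        + ((2 * ν - 1) / (ν ^ 2 - 1)) * U ![x, z, y] + U ![z, y, x] = 0 :=
  symmetry_class_linear_identity_general ν hν₁ hν₂ U hU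
end

section
/- In ℚ[S₅], the element σ_{ν,ε} := y_{t'}* · ξ'_ν · ζ''_ε is nonzero if and only if ν ≠ 1/2 (for each fixed ε ∈ {1,−1}), where y_{t'} is the Young symmetrizer of the standard tableau of shape (3,2) with rows (1,3,5),(2,4), ξ'_ν is the image of ξ_ν under the embedding S₃ ↪ S₅ fixing 4 and 5, and ζ''_ε := e + ε·(4 5). -/
/-!
`ξ'_ν` is affine in `ν`: `ξ'_ν = ξ'_{1/2} + (ν - 1/2) • w` with `w = xiSlope`. The transposition
`(1 3)` is a horizontal permutation of `t'`, so `y_{t'}* · (1 3) = y_{t'}*`, while `ξ'_{1/2}` has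
the left factor `e - (1 3)`. Hence `y_{t'}* ξ'_{1/2} = 0` and `σ_{ν,ε} = (ν - 1/2) • y_{t'}* w ζ''_ε`,
and the last element is nonzero for every `ε`: its coefficient at `(2 3)` is `4/3`.
-/

open MonoidAlgebra

/-- Horizontal permutations of the tableau `t'` with rows `{1,3,5}`, `{2,4}` (0-indexed
`{0,2,4}`, `{1,3}`). -/
def isHoriz' (p : Equiv.Perm (Fin 5)) : Prop :=
  (∀ i ∈ ({0, 2, 4} : Finset (Fin 5)), p i ∈ ({0, 2, 4} : Finset (Fin 5))) ∧
  (∀ i ∈ ({1, 3} : Finset (Fin 5)), p i ∈ ({1, 3} : Finset (Fin 5)))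

/-- Vertical permutations of `t'`: preserving the columns `{1,2}`, `{3,4}`, `{5}`
(0-indexed `{0,1}`, `{2,3}`, `{4}`). -/
def isVert' (q : Equiv.Perm (Fin 5)) : Prop :=
  (∀ i ∈ ({0, 1} : Finset (Fin 5)), q i ∈ ({0, 1} : Finset (Fin 5))) ∧
  (∀ i ∈ ({2, 3} : Finset (Fin 5)), q i ∈ ({2, 3} : Finset (Fin 5))) ∧
  q 4 = 4

instance : DecidablePred isHoriz' := fun p => by unfold isHoriz'; infer_instance
instance : DecidablePred isVert' := fun q => by unfold isVert'; infer_instance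

/-- `y_{t'}* = Σ_{p∈H_{t'}} Σ_{q∈V_{t'}} sign(q)·(p∘q)⁻¹ ∈ ℚ[S₅]`. -/
noncomputable def ytStar' : MonoidAlgebra ℚ (Equiv.Perm (Fin 5)) :=
  ∑ p ∈ Finset.univ.filter isHoriz', ∑ q ∈ Finset.univ.filter isVert',
    single (p * q)⁻¹ ((Equiv.Perm.sign q : ℤ) : ℚ)

/-- `[1,3,2]` embedded in `S₅` (fixing 4 and 5). -/
def q132 : Equiv.Perm (Fin 5) := Equiv.swap 1 2
/-- `[2,1,3]` embedded in `S₅`. -/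
def q213 : Equiv.Perm (Fin 5) := Equiv.swap 0 1
/-- `[2,3,1]` embedded in `S₅`. -/
def q231 : Equiv.Perm (Fin 5) := Equiv.swap 0 2 * Equiv.swap 0 1
/-- `[3,1,2]` embedded in `S₅`. -/
def q312 : Equiv.Perm (Fin 5) := Equiv.swap 0 1 * Equiv.swap 0 2
/-- `[3,2,1]` embedded in `S₅`. -/
def q321 : Equiv.Perm (Fin 5) := Equiv.swap 0 2

/-- `ξ'_ν ∈ ℚ[S₅]`: the image of
`ξ_ν = (1/3)(e + ν[1,3,2] + (1−ν)[2,1,3] − ν[2,3,1] + (ν−1)[3,1,2] − [3,2,1]) ∈ ℚ[S₃]`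
under the embedding `S₃ ↪ S₅` fixing 4 and 5. -/
noncomputable def xiNu' (ν : ℚ) : MonoidAlgebra ℚ (Equiv.Perm (Fin 5)) :=
  single 1 (1 / 3) + single q132 (ν / 3) + single q213 ((1 - ν) / 3)
    + single q231 (-(ν / 3)) + single q312 ((ν - 1) / 3) + single q321 (-(1 / 3))

/-- `ζ''_ε = e + ε·(4 5) ∈ ℚ[S₅]` (0-indexed: the transposition of 3 and 4). -/
noncomputable def zeta (ε : ℚ) : MonoidAlgebra ℚ (Equiv.Perm (Fin 5)) :=
  single 1 1 + single (Equiv.swap 3 4) ε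

/-- `σ_{ν,ε} := y_{t'}* · ξ'_ν · ζ''_ε ∈ ℚ[S₅]`. -/
noncomputable def sigma (ν ε : ℚ) : MonoidAlgebra ℚ (Equiv.Perm (Fin 5)) :=
  ytStar' * xiNu' ν * zeta ε

theorem Finset.sum_comp_mul_left_of_mapsTo {G M : Type*} [Group G] [AddCommMonoid M]
    {s : Finset G} {h : G} (hs : ∀ p ∈ s, h * p ∈ s) (f : G → M) :
    ∑ p ∈ s, f (h * p) = ∑ p ∈ s, f p := by
  classical
  have himage : s.image (h * ·) = s :=
    Finset.eq_of_subset_of_card_le (Finset.image_subset_iff.2 hs)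
      (Finset.card_image_of_injective _ (mul_right_injective h)).ge
  rw [← Finset.sum_image (fun _ _ _ _ ↦ mul_left_cancel), himage]

theorem isHoriz'_inv_mul : ∀ h p, isHoriz' h → isHoriz' p → isHoriz' (h⁻¹ * p) := by
  decide +kernel

theorem ytStar'_mul_single_of_isHoriz' {h : Equiv.Perm (Fin 5)} (hh : isHoriz' h) :
    ytStar' * single h 1 = ytStar' := by
  have hmaps : ∀ p ∈ Finset.univ.filter isHoriz', h⁻¹ * p ∈ Finset.univ.filter isHoriz' := by
    simpa using fun p ↦ isHoriz'_inv_mul h p hh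
  conv_rhs => rw [ytStar', ← Finset.sum_comp_mul_left_of_mapsTo hmaps]
  simp only [ytStar', Finset.sum_mul, single_mul_single, mul_one, mul_inv_rev, inv_inv, mul_assoc]

theorem coeff_ytStar'_mul (x : MonoidAlgebra ℚ (Equiv.Perm (Fin 5))) (g : Equiv.Perm (Fin 5)) :
    (ytStar' * x).coeff g = ∑ p ∈ Finset.univ.filter isHoriz', ∑ q ∈ Finset.univ.filter isVert',
      ((Equiv.Perm.sign q : ℤ) : ℚ) * x.coeff (p * q * g) := by
  simp only [ytStar', Finset.sum_mul, coeff_sum, Finset.sum_apply', coeff_single_mul_apply, inv_inv]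

theorem coeff_mul_zeta (x : MonoidAlgebra ℚ (Equiv.Perm (Fin 5))) (ε : ℚ) (g : Equiv.Perm (Fin 5)) :
    (x * zeta ε).coeff g = x.coeff g + ε * x.coeff (g * Equiv.swap 3 4) := by
  rw [zeta, mul_add, coeff_add, Finsupp.add_apply, coeff_mul_single_apply,
    coeff_mul_single_apply, Equiv.swap_inv, inv_one, mul_one, mul_one, mul_comm]

noncomputable def xiSlope : MonoidAlgebra ℚ (Equiv.Perm (Fin 5)) :=
  single q132 (1 / 3) - single q213 (1 / 3) - single q231 (1 / 3) + single q312 (1 / 3)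

theorem xiNu'_eq_add_smul (ν : ℚ) : xiNu' ν = xiNu' (1 / 2) + (ν - 1 / 2) • xiSlope := by
  simp only [xiNu', xiSlope, ← smul_of]
  module

theorem xiNu'_half_eq_mul : xiNu' (1 / 2) =
    (1 - single q321 1) * (single 1 (1 / 3) + single q132 (1 / 6) + single q213 (1 / 6)) := by
  simp only [xiNu', one_def, sub_mul, mul_add, single_mul_single, one_mul, mul_one,
    show q321 * q132 = q312 by decide, show q321 * q213 = q231 by decide]
  simp only [← smul_of]
  module

theorem ytStar'_mul_xiNu'_half : ytStar' * xiNu' (1 / 2) = 0 := by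
  rw [xiNu'_half_eq_mul, ← mul_assoc, mul_sub, mul_one,
    ytStar'_mul_single_of_isHoriz' (by decide), sub_self, zero_mul]

theorem sigma_eq_smul (ν ε : ℚ) : sigma ν ε = (ν - 1 / 2) • (ytStar' * xiSlope * zeta ε) := by
  rw [sigma, xiNu'_eq_add_smul, mul_add, ytStar'_mul_xiNu'_half, zero_add, mul_smul_comm,
    smul_mul_assoc]

theorem coeff_xiSlope (y : Equiv.Perm (Fin 5)) : xiSlope.coeff y =
    (if q132 = y then 1 / 3 else 0) - (if q213 = y then 1 / 3 else 0)
      - (if q231 = y then 1 / 3 else 0) + (if q312 = y then 1 / 3 else 0) := by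
  simp only [xiSlope, coeff_add, coeff_sub, coeff_single, Finsupp.add_apply, Finsupp.sub_apply,
    Finsupp.single_apply]

theorem coeff_ytStar'_mul_xiSlope_mul_zeta (ε : ℚ) :
    (ytStar' * xiSlope * zeta ε).coeff q132 = 4 / 3 := by
  have hmain : (ytStar' * xiSlope).coeff q132 = 4 / 3 := by
    rw [coeff_ytStar'_mul]; simp only [coeff_xiSlope]; decide +kernel
  have hshift : (ytStar' * xiSlope).coeff (q132 * Equiv.swap 3 4) = 0 := by
    rw [coeff_ytStar'_mul]; simp only [coeff_xiSlope]; decide +kernel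
  rw [coeff_mul_zeta, hmain, hshift, mul_zero, add_zero]

theorem sigma_ne_zero_iff_general (ν ε : ℚ) :
    sigma ν ε ≠ 0 ↔ ν ≠ 1 / 2 := by
  have hslope : ytStar' * xiSlope * zeta ε ≠ 0 := fun h ↦ by
    have hcoeff := coeff_ytStar'_mul_xiSlope_mul_zeta ε
    norm_num [h] at hcoeff
  rw [sigma_eq_smul, Ne, smul_eq_zero, sub_eq_zero]
  tauto

/-- For each `ε ∈ {1,−1}`, the element `σ_{ν,ε} = y_{t'}* · ξ'_ν · ζ''_ε ∈ ℚ[S₅]` is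
nonzero if and only if `ν ≠ 1/2`. -/
theorem sigma_ne_zero_iff (ν ε : ℚ) (hε : ε = 1 ∨ ε = -1) :
    sigma ν ε ≠ 0 ↔ ν ≠ 1 / 2 :=
  sigma_ne_zero_iff_general ν ε
end

section
/- For ν = 1/2, the element σ_{1/2,ε} = y_{t'}* · ξ'_{1/2} · ζ''_ε equals 0 in ℚ[S₅], for both ε = 1 and ε = −1. -/
/-! Right multiplication by an element `h` of the row group of `t'` only reindexes the row sum
in `y_{t'}* = Σ_{p,q} sign(q)·(p q)⁻¹`, so `y_{t'}* h = y_{t'}*`. For the row transposition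
`h = (1 3)` this identifies the six terms of `ξ'_ν` in pairs:
`y_{t'}* ξ'_ν = ((2ν - 1)/3) · y_{t'}* ([1,3,2] - [2,1,3])`, which vanishes at `ν = 1/2`
whatever `ζ''_ε` is. -/

open MonoidAlgebra

open Equiv Finset

lemma isHoriz'_mul {p q : Perm (Fin 5)} (hp : isHoriz' p) (hq : isHoriz' q) :
    isHoriz' (p * q) :=
  ⟨fun i hi => hp.1 _ (hq.1 i hi), fun i hi => hp.2 _ (hq.2 i hi)⟩

lemma sum_isHoriz'_mul_left {M : Type*} [AddCommMonoid M] {h : Perm (Fin 5)}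
    (hh : isHoriz' h) (f : Perm (Fin 5) → M) :
    ∑ p ∈ univ.filter isHoriz', f (h * p) = ∑ p ∈ univ.filter isHoriz', f p := by
  set H := univ.filter isHoriz'
  have hmaps : Set.MapsTo (h * ·) H H := fun p hp =>
    mem_filter.2 ⟨mem_univ _, isHoriz'_mul hh (mem_filter.1 hp).2⟩
  have hbij := (H.finite_toSet.injOn_iff_bijOn_of_mapsTo hmaps).1 (mul_right_injective h).injOn
  exact sum_nbij (h * ·) hmaps hbij.injOn hbij.surjOn fun _ _ => rfl

lemma ytStar'_mul_single_inv {h : Perm (Fin 5)} (hh : isHoriz' h) :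
    ytStar' * single h⁻¹ 1 = ytStar' := by
  simp only [ytStar', sum_mul, single_mul_single, mul_one, ← mul_inv_rev, ← mul_assoc]
  exact sum_isHoriz'_mul_left hh fun p => ∑ q ∈ univ.filter isVert',
    single (p * q)⁻¹ ((Perm.sign q : ℤ) : ℚ)

lemma ytStar'_mul_single_swap : ytStar' * single (swap 0 2) 1 = ytStar' := by
  rw [← swap_inv]
  exact ytStar'_mul_single_inv (by decide)

lemma ytStar'_mul_xiNu' (ν : ℚ) :
    ytStar' * xiNu' ν = ((2 * ν - 1) / 3) • (ytStar' * (single q132 1 - single q213 1)) := by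
  have h231 : single q231 (1 : ℚ) = single (swap 0 2) 1 * single q213 1 := by
    rw [single_mul_single, mul_one]; rfl
  have h312 : single q312 (1 : ℚ) = single (swap 0 2) 1 * single q132 1 := by
    rw [single_mul_single, mul_one]; congr 1; decide
  have hs : ∀ (g : Perm (Fin 5)) (c : ℚ), single g c = c • single g 1 := fun g c => by
    rw [smul_single', mul_one]
  simp only [xiNu', hs _ (_ / 3), hs _ (-(_ / 3)), h231, h312, q321]
  simp only [mul_add, mul_sub, mul_smul_comm, ← mul_assoc, ytStar'_mul_single_swap]
  rw [← MonoidAlgebra.one_def, mul_one]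
  module

/-- For `ν = 1/2`, the element `σ_{1/2,ε} = y_{t'}* · ξ'_{1/2} · ζ''_ε` vanishes in
`ℚ[S₅]`, for both `ε = 1` and `ε = −1`. -/
theorem sigma_half_eq_zero : sigma (1 / 2) 1 = 0 ∧ sigma (1 / 2) (-1) = 0 := by
  have h : ytStar' * xiNu' (1 / 2) = 0 := by
    rw [ytStar'_mul_xiNu']
    norm_num
  simp only [sigma, h, zero_mul, and_self]
end
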